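/- Let f be standard self-concordant and strictly convex with positive-definite Hessian, let x ∈ ℝⁿ, d ≠ 0, and δ = √(dᵀ∇²f(x)d). Then for all 0 ≤ t < 1/δ: f(x+td) ≤ f(x) + t∇f(x)ᵀd - δt - log(1 - δt). -/

import Mathlib

/-!
Restrict `f` to the line `s ↦ x + s • d` and write `φ` for the restriction. Self-concordance says
`φ''' ≤ 2 φ''^{3/2}`, i.e. `(φ''^{-1/2})' ≥ -1`, so `φ''(s)^{-1/2} ≥ 1/δ - s` and hence
`φ''(s) ≤ δ² / (1 - δ s)²` while `δ s < 1`. Integrating this twice from `0` gives the bound, the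
right-hand side being exactly the function with second derivative `δ² / (1 - δ s)²`.
-/

open Real Set
open scoped RealInnerProductSpace

theorem sub_le_sub_of_hasDerivAt_le {u v u' v' : ℝ → ℝ} {a b : ℝ} (hab : a ≤ b)
    (hu : ∀ s ∈ Icc a b, HasDerivAt u (u' s) s) (hv : ∀ s ∈ Icc a b, HasDerivAt v (v' s) s)
    (huv : ∀ s ∈ Ioo a b, u' s ≤ v' s) : u b - u a ≤ v b - v a := by
  have hvu : ∀ s ∈ Icc a b, HasDerivAt (fun s => v s - u s) (v' s - u' s) s :=
    fun s hs => (hv s hs).sub (hu s hs)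
  have hmono : MonotoneOn (fun s => v s - u s) (Icc a b) := by
    refine monotoneOn_of_deriv_nonneg (convex_Icc a b)
      (fun s hs => (hvu s hs).continuousAt.continuousWithinAt) ?_ ?_ <;> rw [interior_Icc]
    · exact fun s hs => (hvu s (Ioo_subset_Icc_self hs)).differentiableAt.differentiableWithinAt
    · intro s hs
      rw [(hvu s (Ioo_subset_Icc_self hs)).deriv]
      linarith [huv s hs]
  linarith [hmono (left_mem_Icc.2 hab) (right_mem_Icc.2 hab) hab]

section SelfConcordantLine

variable {g g' : ℝ → ℝ} {t : ℝ}

theorem inv_sqrt_sub_le_inv_sqrt (ht : 0 ≤ t) (hg : ∀ s ∈ Icc 0 t, HasDerivAt g (g' s) s)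
    (hpos : ∀ s ∈ Icc 0 t, 0 < g s) (hsc : ∀ s ∈ Icc 0 t, g' s ≤ 2 * g s ^ (3 / 2 : ℝ)) :
    (√(g 0))⁻¹ - t ≤ (√(g t))⁻¹ := by
  have hψ : ∀ s ∈ Icc 0 t, HasDerivAt (fun s => (√(g s))⁻¹)
      (-(1 / (2 * √(g s)) * g' s) / √(g s) ^ 2) s := fun s hs =>
    ((hasDerivAt_sqrt (hpos s hs).ne').comp s (hg s hs)).inv (sqrt_pos.2 (hpos s hs)).ne'
  have key := sub_le_sub_of_hasDerivAt_le (u := fun s => -s) ht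
    (fun s _ => (hasDerivAt_id' s).neg) hψ ?_
  · linarith
  intro s hs
  have hgs := hpos s (Ioo_subset_Icc_self hs)
  have hroot : 0 < √(g s) := sqrt_pos.2 hgs
  -- `g ^ (3/2) = g * √g`, so the bound on `g'` says exactly that the derivative is `≥ -1`
  have h32 : g s ^ (3 / 2 : ℝ) = √(g s) ^ 2 * √(g s) := by
    rw [sq_sqrt hgs.le, sqrt_eq_rpow, ← rpow_one_add' hgs.le (by norm_num)]
    norm_num
  have := hsc s (Ioo_subset_Icc_self hs)
  rw [h32] at this
  rw [le_div_iff₀ (by positivity)]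
  field_simp
  nlinarith

theorem le_sq_div_one_sub_mul_sq (ht : 0 ≤ t) (hg : ∀ s ∈ Icc 0 t, HasDerivAt g (g' s) s)
    (hpos : ∀ s ∈ Icc 0 t, 0 < g s) (hsc : ∀ s ∈ Icc 0 t, g' s ≤ 2 * g s ^ (3 / 2 : ℝ))
    (htδ : √(g 0) * t < 1) :
    g t ≤ √(g 0) ^ 2 / (1 - √(g 0) * t) ^ 2 := by
  have hδ : 0 < √(g 0) := sqrt_pos.2 (hpos 0 (left_mem_Icc.2 ht))
  have hgt := hpos t (right_mem_Icc.2 ht)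
  have key := inv_sqrt_sub_le_inv_sqrt ht hg hpos hsc
  have hlow : (1 - √(g 0) * t) / √(g 0) ≤ (√(g t))⁻¹ := by
    rwa [sub_div, one_div, mul_div_cancel_left₀ _ hδ.ne']
  have hroot : √(g t) ≤ √(g 0) / (1 - √(g 0) * t) := by
    rw [le_inv_comm₀ (by positivity) (sqrt_pos.2 hgt), inv_div] at hlow
    exact hlow
  calc g t = √(g t) ^ 2 := (sq_sqrt hgt.le).symm
    _ ≤ (√(g 0) / (1 - √(g 0) * t)) ^ 2 := by gcongr
    _ = _ := div_pow _ _ _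

theorem le_sub_log_one_sub_of_selfConcordant {φ φ' φ'' φ''' : ℝ → ℝ} (ht : 0 ≤ t)
    (hφ : ∀ s ∈ Icc 0 t, HasDerivAt φ (φ' s) s) (hφ' : ∀ s ∈ Icc 0 t, HasDerivAt φ' (φ'' s) s)
    (hφ'' : ∀ s ∈ Icc 0 t, HasDerivAt φ'' (φ''' s) s) (hpos : ∀ s ∈ Icc 0 t, 0 < φ'' s)
    (hsc : ∀ s ∈ Icc 0 t, φ''' s ≤ 2 * φ'' s ^ (3 / 2 : ℝ)) (htδ : √(φ'' 0) * t < 1) :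
    φ t ≤ φ 0 + t * φ' 0 - √(φ'' 0) * t - log (1 - √(φ'' 0) * t) := by
  set δ := √(φ'' 0)
  have hδ : 0 ≤ δ := sqrt_nonneg _
  have hIcc : ∀ {s}, s ∈ Icc 0 t → Icc 0 s ⊆ Icc 0 t := fun hs => Icc_subset_Icc_right hs.2
  have hgap : ∀ s ∈ Icc 0 t, 0 < 1 - δ * s := fun s hs => by
    nlinarith [mul_le_mul_of_nonneg_left hs.2 hδ]
  have hφ''_le : ∀ s ∈ Icc 0 t, φ'' s ≤ δ ^ 2 / (1 - δ * s) ^ 2 := fun s hs =>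
    le_sq_div_one_sub_mul_sq hs.1 (fun r hr => hφ'' r (hIcc hs hr))
      (fun r hr => hpos r (hIcc hs hr)) (fun r hr => hsc r (hIcc hs hr)) (sub_pos.1 (hgap s hs))
  have hlin : ∀ r, HasDerivAt (fun r => 1 - δ * r) (-δ) r := fun r => by
    simpa using ((hasDerivAt_id r).const_mul δ).const_sub 1
  have hφ'_le : ∀ s ∈ Icc 0 t, φ' s - φ' 0 ≤ δ / (1 - δ * s) - δ := by
    intro s hs
    have hv : ∀ r ∈ Icc 0 s,
        HasDerivAt (fun r => δ / (1 - δ * r)) (δ ^ 2 / (1 - δ * r) ^ 2) r := fun r hr =>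
      (((hlin r).inv (hgap r (hIcc hs hr)).ne').const_mul δ).congr_deriv (by ring)
    have := sub_le_sub_of_hasDerivAt_le hs.1 (fun r hr => hφ' r (hIcc hs hr)) hv
      (fun r hr => hφ''_le r (hIcc hs (Ioo_subset_Icc_self hr)))
    simp only [mul_zero, sub_zero, div_one] at this
    linarith
  have hv : ∀ s ∈ Icc 0 t, HasDerivAt (fun s => s * φ' 0 - δ * s - log (1 - δ * s))
      (φ' 0 - δ + δ / (1 - δ * s)) s := fun s hs =>
    ((((hasDerivAt_id' s).mul_const (φ' 0)).sub ((hasDerivAt_id' s).const_mul δ)).sub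
      ((hlin s).log (hgap s hs).ne')).congr_deriv (by ring)
  have := sub_le_sub_of_hasDerivAt_le ht hφ hv
    (fun s hs => by linarith [hφ'_le s (Ioo_subset_Icc_self hs)])
  simp only [zero_mul, mul_zero, sub_self, sub_zero, log_one] at this
  linarith

end SelfConcordantLine

section Line

variable {E F : Type*} [NormedAddCommGroup E] [NormedSpace ℝ E]
  [NormedAddCommGroup F] [NormedSpace ℝ F]

theorem hasDerivAt_iteratedFDeriv_line {f : E → F} {k : ℕ} (hf : ContDiff ℝ (k + 1) f)
    (x d : E) (s : ℝ) :
    HasDerivAt (fun s : ℝ => iteratedFDeriv ℝ k f (x + s • d) fun _ => d)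
      (iteratedFDeriv ℝ (k + 1) f (x + s • d) fun _ => d) s := by
  have hline : HasDerivAt (fun s : ℝ => x + s • d) d s := by
    simpa using ((hasDerivAt_id s).smul_const d).const_add x
  have hD := ((hf.differentiable_iteratedFDeriv (m := k) (by norm_cast; omega)).differentiableAt
    (x := x + s • d)).hasFDerivAt.comp_hasDerivAt s hline
  rw [iteratedFDeriv_succ_apply_left]
  exact (ContinuousMultilinearMap.apply ℝ (fun _ : Fin k => E) F fun _ => d).hasFDerivAt
    |>.comp_hasDerivAt s hD

end Line

theorem self_concordant_upper_bound {n : ℕ}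
    (f : EuclideanSpace ℝ (Fin n) → ℝ) (hf : ContDiff ℝ 3 f)
    (hsc : ∀ (x h : EuclideanSpace ℝ (Fin n)),
      |iteratedFDeriv ℝ 3 f x ![h, h, h]| ≤
        2 * (iteratedFDeriv ℝ 2 f x ![h, h]) ^ ((3 : ℝ) / 2))
    (hconv : ∀ (x h : EuclideanSpace ℝ (Fin n)), h ≠ 0 →
      0 < iteratedFDeriv ℝ 2 f x ![h, h])
    (x d : EuclideanSpace ℝ (Fin n)) (hd : d ≠ 0) (δ : ℝ)
    (hδ : δ = Real.sqrt (iteratedFDeriv ℝ 2 f x ![d, d])) :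
    ∀ t : ℝ, 0 ≤ t → t < 1 / δ →
      f (x + t • d) ≤ f x + t * ⟪gradient f x, d⟫ - δ * t - Real.log (1 - δ * t) := by
  intro t ht ht'
  simp only [Matrix.vec_single_eq_const, Matrix.vecCons_const] at hsc hconv hδ
  set φ : ℕ → ℝ → ℝ := fun k s => iteratedFDeriv ℝ k f (x + s • d) fun _ => d
  have hφ : ∀ k < 3, ∀ s, HasDerivAt (φ k) (φ (k + 1) s) s := fun k hk s =>
    hasDerivAt_iteratedFDeriv_line (hf.of_le (by norm_cast)) x d s
  have hδφ : δ = √(φ 2 0) := by simpa [φ] using hδ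
  have hδpos : 0 < δ := hδφ ▸ sqrt_pos.2 (hconv _ d hd)
  have key := le_sub_log_one_sub_of_selfConcordant ht (fun s _ => hφ 0 (by norm_num) s)
    (fun s _ => hφ 1 (by norm_num) s) (fun s _ => hφ 2 (by norm_num) s)
    (fun s _ => hconv _ d hd) (fun s _ => (le_abs_self _).trans (hsc _ d))
    (hδφ ▸ (lt_div_iff₀' hδpos).1 ht')
  have hgrad : ⟪gradient f x, d⟫ = φ 1 0 := by
    simp [φ, gradient, InnerProductSpace.toDual_symm_apply]
  simpa [φ, hgrad, hδ] using key
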